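/- arXiv:1507.00492 — 2 statements merged into one kernel-verified Lean document; each statement's English description precedes it below -/
import Mathlib

section
/- Let 𝒜 be a compact IRU-set of strictly positive N×N matrices. If à ∈ 𝒜 attains the maximum spectral radius ρ(Ã) = max_{A∈𝒜} ρ(A), and ṽ > 0 is a Perron eigenvector of à with Ãṽ = ρ(Ã)ṽ, then Aṽ ≤ ρ(Ã)ṽ componentwise for every A ∈ 𝒜. -/
/-!
Suppose `(A v)ᵢ > ρ vᵢ` for some `A ∈ 𝒜`, where `ρ = ρ(Ã)`. Since `𝒜` is an IRU-set, the matrix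
`B` obtained from `Ã` by replacing its `i`-th row with that of `A` lies in `𝒜`, and
`ρ v ≤ B v` with strict inequality in coordinate `i`. As `B > 0`, the vector `w = B v` satisfies
`ρ w < B w` in every coordinate, hence `μ w ≤ B w` for some `μ > ρ`. Then `μᵏ w ≤ Bᵏ w`, so
`‖Bᵏ‖ ≥ c μᵏ` for some `c > 0`, and Gelfand's formula gives `ρ(B) ≥ μ > ρ(Ã)`, contradicting the
maximality of `ρ(Ã)`.
-/

open Matrix

/-- Spectral radius of a real square matrix: the maximum modulus of its
(complex) eigenvalues, i.e. of the roots of the characteristic polynomial of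
its complexification. -/
noncomputable def specRad {N : ℕ} (A : Matrix (Fin N) (Fin N) ℝ) : ℝ :=
  sSup {r : ℝ | ∃ μ : ℂ, (A.map Complex.ofReal).charpoly.IsRoot μ ∧ r = ‖μ‖}

/-- An independent row uncertainty (IRU) set of matrices: the set of all
matrices whose `i`-th row belongs to a prescribed set of rows `rows i`. -/
def IsIRU {N M : ℕ} (S : Set (Matrix (Fin N) (Fin M) ℝ)) : Prop :=
  ∃ rows : Fin N → Set (Fin M → ℝ), S = {A | ∀ i, A i ∈ rows i}

open Filter Topology

theorem ofReal_le_spectralRadius_of_mul_le_norm_pow {A : Type*} [NormedRing A]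
    [NormedAlgebra ℂ A] [CompleteSpace A] {a : A} {μ c : ℝ} (hc : 0 < c)
    (h : ∀ n : ℕ, μ ^ n * c ≤ ‖a ^ n‖) : ENNReal.ofReal μ ≤ spectralRadius ℂ a := by
  rcases le_or_gt μ 0 with hμ | hμ
  · simp [ENNReal.ofReal_of_nonpos hμ]
  have hroot : ∀ᶠ n : ℕ in atTop, μ * c ^ (1 / n : ℝ) = (μ ^ n * c) ^ (1 / n : ℝ) := by
    filter_upwards [eventually_ne_atTop 0] with n hn
    rw [Real.mul_rpow (by positivity) hc.le, one_div, Real.pow_rpow_inv_natCast hμ.le hn]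
  have hlim : Tendsto (fun n : ℕ => (μ ^ n * c) ^ (1 / n : ℝ)) atTop (𝓝 μ) := by
    have hc1 : Tendsto (fun n : ℕ => c ^ (1 / n : ℝ)) atTop (𝓝 1) := by
      simpa [Function.comp_def] using (Real.continuousAt_const_rpow hc.ne').tendsto.comp
        tendsto_one_div_atTop_nhds_zero_nat
    simpa using (tendsto_const_nhds.mul hc1).congr' hroot
  exact le_of_tendsto_of_tendsto' (ENNReal.tendsto_ofReal hlim)
    (spectrum.pow_norm_pow_one_div_tendsto_nhds_spectralRadius a) fun n =>
      ENNReal.ofReal_le_ofReal (Real.rpow_le_rpow (by positivity) (h n) (by positivity))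

theorem norm_le_specRad {N : ℕ} {B : Matrix (Fin N) (Fin N) ℝ} {z : ℂ}
    (hz : (B.map Complex.ofReal).charpoly.IsRoot z) : ‖z‖ ≤ specRad B := by
  have hfin := (Polynomial.finite_setOfPred_isRoot
    (B.map Complex.ofReal).charpoly_monic.ne_zero).image (‖·‖)
  refine le_csSup (hfin.bddAbove.mono ?_) ⟨z, hz, rfl⟩
  rintro _ ⟨μ, hμ, rfl⟩
  exact ⟨μ, hμ, rfl⟩

theorem spectralRadius_map_ofReal_le_specRad {N : ℕ} (B : Matrix (Fin N) (Fin N) ℝ) :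
    spectralRadius ℂ (B.map Complex.ofReal) ≤ ENNReal.ofReal (specRad B) :=
  iSup₂_le fun z hz => by
    rw [← enorm_eq_nnnorm, ← ofReal_norm]
    exact ENNReal.ofReal_le_ofReal (norm_le_specRad (mem_spectrum_iff_isRoot_charpoly.mp hz))

theorem pow_smul_le_pow_mulVec {n : Type*} [Fintype n] [DecidableEq n] {B : Matrix n n ℝ}
    {w : n → ℝ} {μ : ℝ} (hB : ∀ i j, 0 ≤ B i j) (hμ : 0 ≤ μ) (h : μ • w ≤ B *ᵥ w) (k : ℕ) :
    μ ^ k • w ≤ (B ^ k) *ᵥ w := by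
  have hmono : ∀ {u u' : n → ℝ}, u ≤ u' → B *ᵥ u ≤ B *ᵥ u' := fun huu' i =>
    Finset.sum_le_sum fun j _ => mul_le_mul_of_nonneg_left (huu' j) (hB i j)
  induction k with
  | zero => simp
  | succ k ih =>
    calc μ ^ (k + 1) • w = μ ^ k • (μ • w) := by rw [pow_succ, mul_smul]
      _ ≤ μ ^ k • (B *ᵥ w) := smul_le_smul_of_nonneg_left h (pow_nonneg hμ k)
      _ = B *ᵥ (μ ^ k • w) := (mulVec_smul B _ w).symm
      _ ≤ B *ᵥ ((B ^ k) *ᵥ w) := hmono ih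
      _ = (B ^ (k + 1)) *ᵥ w := by rw [mulVec_mulVec, pow_succ']

section LinftyOpNorm

attribute [local instance] Matrix.linftyOpNormedAddCommGroup Matrix.linftyOpNormedRing
  Matrix.linftyOpNormedAlgebra

theorem le_specRad_of_smul_le_mulVec {N : ℕ} {B : Matrix (Fin N) (Fin N) ℝ} {w : Fin N → ℝ}
    {μ : ℝ} (hB : ∀ i j, 0 ≤ B i j) (hw : 0 < w) (hμ : 0 < μ)
    (h : μ • w ≤ B *ᵥ w) : μ ≤ specRad B := by
  obtain ⟨-, i, hi⟩ := Pi.lt_def.mp hw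
  have hw_norm : 0 < ‖w‖ := hi.trans_le ((Real.le_norm_self _).trans (norm_le_pi_norm w i))
  have hgrowth : ∀ k : ℕ, μ ^ k * (w i / ‖w‖) ≤ ‖(B.map Complex.ofReal) ^ k‖ := by
    intro k
    have hpow : (B.map Complex.ofReal) ^ k = (B ^ k).map Complex.ofReal :=
      (map_pow Complex.ofRealHom.mapMatrix B k).symm
    have hnorm : ‖(B ^ k).map Complex.ofReal‖ = ‖B ^ k‖ := by
      simp [linfty_opNorm_def, Matrix.map_apply]
    rw [hpow, hnorm, ← mul_div_assoc, div_le_iff₀ hw_norm]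
    calc μ ^ k * w i ≤ ((B ^ k) *ᵥ w) i := pow_smul_le_pow_mulVec hB hμ.le h k i
      _ ≤ ‖(B ^ k) *ᵥ w‖ := (Real.le_norm_self _).trans (norm_le_pi_norm _ i)
      _ ≤ ‖B ^ k‖ * ‖w‖ := linfty_opNorm_mulVec _ _
  have := (ofReal_le_spectralRadius_of_mul_le_norm_pow (div_pos hi hw_norm) hgrowth).trans
    (spectralRadius_map_ofReal_le_specRad B)
  exact (ENNReal.ofReal_le_ofReal_iff'.mp this).resolve_right hμ.not_ge

end LinftyOpNorm

theorem IsIRU.updateRow_mem {N M : ℕ} {S : Set (Matrix (Fin N) (Fin M) ℝ)} (hS : IsIRU S)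
    {A A' : Matrix (Fin N) (Fin M) ℝ} (hA : A ∈ S) (hA' : A' ∈ S) (i : Fin N) :
    A.updateRow i (A' i) ∈ S := by
  obtain ⟨rows, rfl⟩ := hS
  intro j
  rcases eq_or_ne j i with rfl | hj
  · simpa using hA' j
  · simpa [updateRow_ne hj] using hA j

theorem mulVec_apply_pos {m n : Type*} [Fintype n] {B : Matrix m n ℝ} {u : n → ℝ}
    (hB : ∀ i j, 0 < B i j) (hu : 0 < u) (i : m) : 0 < (B *ᵥ u) i := by
  obtain ⟨hu, j, hj⟩ := Pi.lt_def.mp hu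
  exact Finset.sum_pos' (fun k _ => mul_nonneg (hB i k).le (hu k))
    ⟨j, Finset.mem_univ j, mul_pos (hB i j) hj⟩

theorem exists_gt_forall_mul_lt {ι : Type*} [Finite ι] {ρ : ℝ} {w u : ι → ℝ}
    (h : ∀ j, ρ * w j < u j) : ∃ μ, ρ < μ ∧ ∀ j, μ * w j < u j := by
  have hnear : ∀ᶠ μ in 𝓝[>] ρ, ∀ j, μ * w j < u j := eventually_all.2 fun j =>
    (((continuous_mul_const (w j)).tendsto ρ).eventually_lt_const (h j)).filter_mono
      nhdsWithin_le_nhds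
  obtain ⟨μ, hμ, hρμ⟩ := (hnear.and self_mem_nhdsWithin).exists
  exact ⟨μ, hρμ, hμ⟩

theorem exists_gt_smul_le_mulVec_mulVec {n : Type*} [Fintype n] {B : Matrix n n ℝ}
    {v : n → ℝ} {ρ : ℝ} (hB : ∀ i j, 0 < B i j) (h : ρ • v < B *ᵥ v) :
    ∃ μ, ρ < μ ∧ μ • (B *ᵥ v) ≤ B *ᵥ (B *ᵥ v) := by
  have hgap : ∀ j, ρ * (B *ᵥ v) j < (B *ᵥ (B *ᵥ v)) j := fun j => by
    have := mulVec_apply_pos hB (sub_pos.mpr h) j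
    rw [mulVec_sub, mulVec_smul] at this
    simpa using this
  obtain ⟨μ, hρμ, hμ⟩ := exists_gt_forall_mul_lt hgap
  exact ⟨μ, hρμ, fun j => (hμ j).le⟩

theorem stmt_7_general {N : ℕ} (S : Set (Matrix (Fin N) (Fin N) ℝ)) (hS : IsIRU S)
    (hpos : ∀ A ∈ S, ∀ i j, 0 < A i j)
    (A₀ : Matrix (Fin N) (Fin N) ℝ) (hA₀ : A₀ ∈ S)
    (hmax : ∀ A ∈ S, specRad A ≤ specRad A₀)
    (v : Fin N → ℝ) (hv : ∀ i, 0 < v i)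
    (heig : A₀.mulVec v = specRad A₀ • v) :
    ∀ A ∈ S, A.mulVec v ≤ specRad A₀ • v := by
  intro A hA
  by_contra hAv
  set ρ := specRad A₀
  obtain ⟨i, hi⟩ : ∃ i, ρ * v i < (A *ᵥ v) i := by simpa [Pi.le_def] using hAv
  have hv_pos : 0 < v := Pi.lt_def.mpr ⟨fun j => (hv j).le, i, hv i⟩
  have hρ : 0 < ρ := by
    have := mulVec_apply_pos (hpos A₀ hA₀) hv_pos i
    rw [heig] at this
    exact pos_of_mul_pos_left this (hv i).le
  set B := A₀.updateRow i (A i)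
  have hB : B ∈ S := hS.updateRow_mem hA₀ hA i
  have hBv : ρ • v < B *ᵥ v := by
    refine Pi.lt_def.mpr ⟨?_, i, ?_⟩
    · rw [updateRow_mulVec, le_update_iff, heig]
      exact ⟨hi.le, fun _ _ => le_rfl⟩
    · rw [updateRow_mulVec, Function.update_self]
      exact hi
  obtain ⟨μ, hρμ, hμ⟩ := exists_gt_smul_le_mulVec_mulVec (hpos B hB) hBv
  have hμB : μ ≤ specRad B := le_specRad_of_smul_le_mulVec (fun j k => (hpos B hB j k).le)
    ((smul_pos hρ hv_pos).trans hBv) (hρ.trans hρμ) hμ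
  linarith [hmax B hB]

theorem stmt_7 {N : ℕ} (S : Set (Matrix (Fin N) (Fin N) ℝ)) (hS : IsIRU S)
    (hcomp : IsCompact S) (hpos : ∀ A ∈ S, ∀ i j, 0 < A i j)
    (A₀ : Matrix (Fin N) (Fin N) ℝ) (hA₀ : A₀ ∈ S)
    (hmax : ∀ A ∈ S, specRad A ≤ specRad A₀)
    (v : Fin N → ℝ) (hv : ∀ i, 0 < v i)
    (heig : A₀.mulVec v = specRad A₀ • v) :
    ∀ A ∈ S, A.mulVec v ≤ specRad A₀ • v :=
  stmt_7_general S hS hpos A₀ hA₀ hmax v hv heig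
end

section
/- Let 𝒜 be a bounded set of nonnegative N×N matrices. Then the lower spectral radius of the convex hull of 𝒜 equals the lower spectral radius of 𝒜: ρ̌(co(𝒜)) = ρ̌(𝒜). -/
open Matrix

/-- Lower spectral radius (joint spectral subradius) of a set of matrices,
expressed via spectral radii of finite products. -/
noncomputable def lsr {N : ℕ} (S : Set (Matrix (Fin N) (Fin N) ℝ)) : ℝ :=
  sInf {r : ℝ | ∃ n : ℕ, 1 ≤ n ∧ ∃ A : Fin n → Matrix (Fin N) (Fin N) ℝ,
    (∀ i, A i ∈ S) ∧ r = specRad ((List.ofFn A).reverse.prod) ^ ((n : ℝ)⁻¹)}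

/-! For a nonnegative matrix `P` the spectral radius is at most the entry sum `σ(P)`, so every
product of `n` elements of `S` has `σ ≥ ρ̌(S)ⁿ`. Since `σ` of a product is linear in each factor,
the bound survives replacing the factors one at a time by elements of `co(S)`. Applied to the
powers of a product `M` of `n` elements of `co(S)` it gives `σ(Mᵏ) ≥ ρ̌(S)ⁿᵏ`, and Gelfand's
formula (for the `ℓ∞`-operator norm, which is comparable to `σ`) turns this into
`ρ(M) ≥ ρ̌(S)ⁿ`. The reverse inequality is the monotonicity of `ρ̌` under inclusion. -/

open Filter

section EntrySum

variable {m n : Type*} [Fintype m] [Fintype n]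

def entrySum (A : Matrix m n ℝ) : ℝ := ∑ i, ∑ j, A i j

lemma entrySum_nonneg {A : Matrix m n ℝ} (hA : ∀ i j, 0 ≤ A i j) : 0 ≤ entrySum A :=
  Finset.sum_nonneg fun i _ => Finset.sum_nonneg fun j _ => hA i j

lemma isLinearMap_entrySum_mul_mul (P Q : Matrix n n ℝ) :
    IsLinearMap ℝ fun X => entrySum (P * X * Q) :=
  ⟨fun X Y => by
    simp only [mul_add, add_mul, entrySum, Matrix.add_apply, Finset.sum_add_distrib],
  fun c X => by
    simp only [mul_smul_comm, smul_mul_assoc, entrySum, Matrix.smul_apply, smul_eq_mul,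
      Finset.mul_sum]⟩

variable (n) in
def nonnegMatrices [DecidableEq n] : Submonoid (Matrix n n ℝ) where
  carrier := {A | ∀ i j, 0 ≤ A i j}
  mul_mem' hA hB i j := Finset.sum_nonneg fun k _ => mul_nonneg (hA i k) (hB k j)
  one_mem' i j := by by_cases h : i = j <;> simp [one_apply, h]

end EntrySum

section LinftyNorm

attribute [local instance] Matrix.linftyOpSeminormedAddCommGroup
  Matrix.linftyOpNormedRing

variable {m n α : Type*} [Fintype m] [Fintype n]

lemma linfty_opNorm_le_sum_norm [SeminormedAddCommGroup α] (A : Matrix m n α) :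
    ‖A‖ ≤ ∑ i, ∑ j, ‖A i j‖ := by
  have h : ‖A‖₊ ≤ ∑ i, ∑ j, ‖A i j‖₊ := by
    rw [linfty_opNNNorm_def]
    exact Finset.sup_le fun i _ => Finset.single_le_sum (f := fun i => ∑ j, ‖A i j‖₊)
      (fun _ _ => zero_le) (Finset.mem_univ i)
  simpa using NNReal.coe_le_coe.2 h

lemma sum_norm_le_card_mul_linfty_opNorm [SeminormedAddCommGroup α] (A : Matrix m n α) :
    ∑ i, ∑ j, ‖A i j‖ ≤ Fintype.card m * ‖A‖ := by
  have row (i : m) : ∑ j, ‖A i j‖ ≤ ‖A‖ := by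
    have h : ∑ j, ‖A i j‖₊ ≤ ‖A‖₊ := by
      rw [linfty_opNNNorm_def]
      exact Finset.le_sup (f := fun i => ∑ j, ‖A i j‖₊) (Finset.mem_univ i)
    simpa using NNReal.coe_le_coe.2 h
  calc ∑ i, ∑ j, ‖A i j‖ ≤ ∑ _i : m, ‖A‖ := Finset.sum_le_sum fun i _ => row i
    _ = Fintype.card m * ‖A‖ := by simp

lemma linfty_opNorm_one_le [NormedRing α] [NormOneClass α] [DecidableEq n] :
    ‖(1 : Matrix n n α)‖ ≤ 1 :=
  (linfty_opNorm_diagonal _).trans_le <|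
    (pi_norm_le_iff_of_nonneg zero_le_one).2 fun _ => norm_one.le

lemma norm_map_ofReal_le_entrySum {A : Matrix m n ℝ} (hA : ∀ i j, 0 ≤ A i j) :
    ‖A.map Complex.ofReal‖ ≤ entrySum A :=
  (linfty_opNorm_le_sum_norm _).trans_eq <| by
    simp [entrySum, Complex.norm_real, abs_of_nonneg (hA _ _)]

lemma entrySum_le_card_mul_norm_map_ofReal (A : Matrix m n ℝ) :
    entrySum A ≤ Fintype.card m * ‖A.map Complex.ofReal‖ :=
  le_trans (Finset.sum_le_sum fun i _ => Finset.sum_le_sum fun j _ => by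
      simpa using le_abs_self (A i j))
    (sum_norm_le_card_mul_linfty_opNorm _)

end LinftyNorm

lemma ofReal_le_spectralRadius_of_pow_le {A : Type*} [NormedRing A] [NormedAlgebra ℂ A]
    [CompleteSpace A] (a : A) {C d : ℝ} (h : ∀ᶠ k in atTop, d ^ k ≤ C * ‖a ^ k‖) :
    ENNReal.ofReal d ≤ spectralRadius ℂ a := by
  by_contra! hlt
  obtain ⟨t, -, hρt, htd⟩ := ENNReal.lt_iff_exists_real_btwn.1 hlt
  have htd : t < d := (ENNReal.ofReal_lt_ofReal_iff'.1 htd).1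
  have ht : 0 < t := ENNReal.ofReal_pos.1 (pos_of_gt hρt)
  have hnorm : ∀ᶠ k : ℕ in atTop, ‖a ^ k‖ < t ^ k := by
    have gelfand := spectrum.pow_norm_pow_one_div_tendsto_nhds_spectralRadius a
    filter_upwards [gelfand.eventually_lt_const hρt, eventually_ge_atTop 1] with k hk hk1
    have hk := (ENNReal.ofReal_lt_ofReal_iff'.1 hk).1
    rwa [one_div, Real.rpow_inv_lt_iff_of_pos (norm_nonneg _) ht.le (by positivity),
      Real.rpow_natCast] at hk
  have hgrow : ∀ᶠ k : ℕ in atTop, C < (d / t) ^ k :=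
    (tendsto_pow_atTop_atTop_of_one_lt ((one_lt_div ht).2 htd)).eventually_gt_atTop C
  obtain ⟨k, hk, hnk, hCk⟩ := (h.and (hnorm.and hgrow)).exists
  rw [div_pow, lt_div_iff₀ (by positivity)] at hCk
  have : 0 < d ^ k := pow_pos (ht.trans htd) k
  rcases le_or_gt 0 C with hC | hC <;> nlinarith [norm_nonneg (a ^ k)]

section SpectralRadius

attribute [local instance] Matrix.linftyOpNormedRing Matrix.linftyOpNormedAlgebra

variable {N : ℕ}

lemma specRad_nonneg (M : Matrix (Fin N) (Fin N) ℝ) : 0 ≤ specRad M :=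
  Real.sSup_nonneg (by rintro _ ⟨μ, -, rfl⟩; exact norm_nonneg μ)

lemma norm_le_specRad_s15 {M : Matrix (Fin N) (Fin N) ℝ} {μ : ℂ}
    (hμ : μ ∈ spectrum ℂ (M.map Complex.ofReal)) : ‖μ‖ ≤ specRad M := by
  have hroots : {μ : ℂ | (M.map Complex.ofReal).charpoly.IsRoot μ}.Finite :=
    Polynomial.finite_setOfPred_isRoot (charpoly_monic _).ne_zero
  refine le_csSup ((hroots.image (‖·‖)).bddAbove.mono ?_)
    ⟨μ, mem_spectrum_iff_isRoot_charpoly.1 hμ, rfl⟩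
  rintro _ ⟨ν, hν, rfl⟩
  exact ⟨ν, hν, rfl⟩

lemma specRad_le {M : Matrix (Fin N) (Fin N) ℝ} {c : ℝ} (hc : 0 ≤ c)
    (h : ∀ μ ∈ spectrum ℂ (M.map Complex.ofReal), ‖μ‖ ≤ c) : specRad M ≤ c :=
  Real.sSup_le (by rintro _ ⟨μ, hμ, rfl⟩; exact h μ (mem_spectrum_iff_isRoot_charpoly.2 hμ)) hc

lemma spectralRadius_le_ofReal_specRad (M : Matrix (Fin N) (Fin N) ℝ) :
    spectralRadius ℂ (M.map Complex.ofReal) ≤ ENNReal.ofReal (specRad M) :=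
  iSup₂_le fun μ hμ => by
    rw [← enorm_eq_nnnorm, ← ofReal_norm]
    exact ENNReal.ofReal_le_ofReal (norm_le_specRad_s15 hμ)

lemma specRad_le_entrySum {P : Matrix (Fin N) (Fin N) ℝ} (hP : ∀ i j, 0 ≤ P i j) :
    specRad P ≤ entrySum P :=
  specRad_le (entrySum_nonneg hP) fun _ hμ =>
    calc _ ≤ ‖P.map Complex.ofReal‖ * ‖(1 : Matrix (Fin N) (Fin N) ℂ)‖ :=
          spectrum.norm_le_norm_mul_of_mem hμ
      _ ≤ ‖P.map Complex.ofReal‖ := mul_le_of_le_one_right (norm_nonneg _) linfty_opNorm_one_le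
      _ ≤ entrySum P := norm_map_ofReal_le_entrySum hP

lemma le_specRad_of_pow_le_entrySum {M : Matrix (Fin N) (Fin N) ℝ} {d : ℝ}
    (h : ∀ᶠ k in atTop, d ^ k ≤ entrySum (M ^ k)) : d ≤ specRad M := by
  have hgrowth : ∀ᶠ k in atTop, d ^ k ≤ N * ‖M.map Complex.ofReal ^ k‖ :=
    h.mono fun k hk => by
      have hpow : (M ^ k).map Complex.ofReal = M.map Complex.ofReal ^ k :=
        M.map_pow Complex.ofRealHom k
      simpa [hpow] using hk.trans (entrySum_le_card_mul_norm_map_ofReal (M ^ k))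
  exact (ENNReal.ofReal_le_ofReal_iff (specRad_nonneg M)).1 <|
    (ofReal_le_spectralRadius_of_pow_le _ hgrowth).trans (spectralRadius_le_ofReal_specRad M)

end SpectralRadius

section LowerSpectralRadius

variable {N : ℕ} {S T : Set (Matrix (Fin N) (Fin N) ℝ)}

lemma lsr_nonneg (S : Set (Matrix (Fin N) (Fin N) ℝ)) : 0 ≤ lsr S :=
  Real.sInf_nonneg <| by
    rintro _ ⟨n, -, A, -, rfl⟩
    exact Real.rpow_nonneg (specRad_nonneg _) _

lemma lsr_le {n : ℕ} (hn : 1 ≤ n) {A : Fin n → Matrix (Fin N) (Fin N) ℝ} (hA : ∀ i, A i ∈ S) :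
    lsr S ≤ specRad ((List.ofFn A).reverse.prod) ^ ((n : ℝ)⁻¹) := by
  refine csInf_le ⟨0, ?_⟩ ⟨n, hn, A, hA, rfl⟩
  rintro _ ⟨n, -, A, -, rfl⟩
  exact Real.rpow_nonneg (specRad_nonneg _) _

lemma le_lsr (hS : S.Nonempty) {c : ℝ}
    (h : ∀ n, 1 ≤ n → ∀ A : Fin n → Matrix (Fin N) (Fin N) ℝ, (∀ i, A i ∈ S) →
      c ≤ specRad ((List.ofFn A).reverse.prod) ^ ((n : ℝ)⁻¹)) :
    c ≤ lsr S := by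
  obtain ⟨A, hA⟩ := hS
  refine le_csInf ⟨_, 1, le_rfl, fun _ => A, fun _ => hA, rfl⟩ ?_
  rintro _ ⟨n, hn, B, hB, rfl⟩
  exact h n hn B hB

lemma lsr_le_lsr_of_subset (hST : S ⊆ T) (hS : S.Nonempty) : lsr T ≤ lsr S :=
  le_lsr hS fun _ hn _ hA => lsr_le hn fun i => hST (hA i)

lemma pow_lsr_le_specRad_prod {L : List (Matrix (Fin N) (Fin N) ℝ)} (hL : L ≠ [])
    (hLS : ∀ X ∈ L, X ∈ S) : lsr S ^ L.length ≤ specRad L.prod := by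
  have h := lsr_le (List.length_pos_iff.2 (List.reverse_ne_nil_iff.2 hL))
    (A := L.reverse.get) fun i => hLS _ (List.mem_reverse.1 (L.reverse.get_mem i))
  rwa [List.ofFn_get, List.reverse_reverse, List.length_reverse,
    Real.le_rpow_inv_iff_of_pos (lsr_nonneg S) (specRad_nonneg _)
      (by simpa using List.length_pos_iff.2 hL),
    Real.rpow_natCast] at h

lemma pow_lsr_le_entrySum_prod (hnn : ∀ A ∈ S, ∀ i j, 0 ≤ A i j)
    {L : List (Matrix (Fin N) (Fin N) ℝ)} (hL : L ≠ []) (hLS : ∀ X ∈ L, X ∈ convexHull ℝ S) :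
    lsr S ^ L.length ≤ entrySum L.prod := by
  suffices key : ∀ L₁ L₂ : List (Matrix (Fin N) (Fin N) ℝ), (∀ X ∈ L₁, X ∈ S) →
      (∀ X ∈ L₂, X ∈ convexHull ℝ S) → L₁ ++ L₂ ≠ [] →
      lsr S ^ (L₁ ++ L₂).length ≤ entrySum (L₁ ++ L₂).prod from
    key [] L (by simp) hLS (by simpa using hL)
  intro L₁ L₂ h₁ h₂ hne
  induction L₂ generalizing L₁ with
  | nil =>
    rw [List.append_nil] at hne ⊢
    exact (pow_lsr_le_specRad_prod hne h₁).trans <| specRad_le_entrySum <|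
      (nonnegMatrices _).list_prod_mem fun X hX => hnn X (h₁ X hX)
  | cons X L₂ ih =>
    have hS : ∀ A ∈ S, lsr S ^ (L₁ ++ X :: L₂).length ≤ entrySum (L₁.prod * A * L₂.prod) := by
      intro A hA
      have h := ih (L₁ ++ [A]) (by simpa [or_imp, forall_and] using ⟨h₁, hA⟩)
        (fun Y hY => h₂ Y (.tail _ hY)) (by simp)
      simpa [List.prod_append, mul_assoc] using h
    have hX := convexHull_min (t := {Y | _ ≤ entrySum (L₁.prod * Y * L₂.prod)}) hS
      (convex_halfSpace_ge (isLinearMap_entrySum_mul_mul _ _) _) (h₂ X List.mem_cons_self)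
    simpa [List.prod_append, mul_assoc] using hX

lemma lsr_le_lsr_convexHull (hnn : ∀ A ∈ S, ∀ i j, 0 ≤ A i j) (hS : S.Nonempty) :
    lsr S ≤ lsr (convexHull ℝ S) := by
  refine le_lsr (hS.mono (subset_convexHull ℝ S)) fun n hn B hB => ?_
  set L := (List.ofFn B).reverse
  have hLS : ∀ X ∈ L, X ∈ convexHull ℝ S := by
    simpa [L, List.mem_ofFn] using hB
  have hpow : ∀ k ≥ 1, (lsr S ^ n) ^ k ≤ entrySum (L.prod ^ k) := by
    intro k hk
    have h := pow_lsr_le_entrySum_prod hnn (L := (List.replicate k L).flatten)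
      (by simp [L, Nat.one_le_iff_ne_zero.1 hk, Nat.one_le_iff_ne_zero.1 hn])
      (by simpa using fun X _ => hLS X)
    simpa [L, List.prod_flatten, List.length_flatten, ← pow_mul, mul_comm] using h
  have h := le_specRad_of_pow_le_entrySum (eventually_atTop.2 ⟨1, hpow⟩)
  rwa [Real.le_rpow_inv_iff_of_pos (lsr_nonneg S) (specRad_nonneg _) (by positivity),
    Real.rpow_natCast]

end LowerSpectralRadius

theorem stmt_15_general {N : ℕ} (S : Set (Matrix (Fin N) (Fin N) ℝ))
    (hnn : ∀ A ∈ S, ∀ i j, 0 ≤ A i j) :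
    lsr (convexHull ℝ S) = lsr S := by
  rcases S.eq_empty_or_nonempty with rfl | hS
  · rw [convexHull_empty]
  · exact le_antisymm (lsr_le_lsr_of_subset (subset_convexHull ℝ S) hS)
      (lsr_le_lsr_convexHull hnn hS)

theorem stmt_15 {N : ℕ} (S : Set (Matrix (Fin N) (Fin N) ℝ))
    (hb : ∃ C, ∀ A ∈ S, ∀ i j, |A i j| ≤ C)
    (hnn : ∀ A ∈ S, ∀ i j, 0 ≤ A i j) :
    lsr (convexHull ℝ S) = lsr S :=
  stmt_15_general S hnn
end
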